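/- arXiv:1309.7290 — 3 statements merged into one kernel-verified Lean document; each statement's English description precedes it below -/
import Mathlib

section
/- Let k₀ : G × G → ℂ be a measurable positive type kernel on a locally compact second countable group G, bounded on every tube (in particular bounded, by the positive type property and boundedness on the diagonal), and let f : G → [0,∞) be continuous, compactly supported with ∫ f = 1. Then the kernel k(s,t) = ∫∫ f(v) f(w) k₀(sv, tw) dμ(v) dμ(w) is again of positive type. -/
/-!
With `ν = f • μ`, the quadratic form `∑ λᵢ λ̄ⱼ k(sⱼ, sᵢ)` of the smoothed kernel equals
`∫∫ Q dν dν` for `Q(v, w) = ∑ λᵢ λ̄ⱼ k₀(sⱼ v, sᵢ w)`, which is again of positive type. For a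
bounded measurable kernel `Q` of positive type and a probability measure `ν`, sample `M`
independent `ν`-distributed points `x₁, …, x_M`: then
`0 ≤ 𝔼 ∑_{a,b} Q(x_b, x_a) = M (M - 1) ∫∫ Q dν dν + M ∫ Q(u, u) dν(u)`,
and dividing by `M (M - 1)` and letting `M → ∞` gives `∫∫ Q dν dν ≥ 0`.
-/

open MeasureTheory
open scoped ComplexOrder

/-- A kernel is of positive type if all matrices `(k(sᵢ,sⱼ))ᵢⱼ` are positive
semidefinite. -/
def IsPositiveTypeKernel {G : Type*} (k : G → G → ℂ) : Prop :=
  ∀ (n : ℕ) (s : Fin n → G) (lam : Fin n → ℂ),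
    0 ≤ ∑ i, ∑ j, lam i * (starRingEnd ℂ) (lam j) * k (s j) (s i)

open ProbabilityTheory

namespace IsPositiveTypeKernel

variable {X Y : Type*} {k : X → X → ℂ}

theorem sum_sum_nonneg (hk : IsPositiveTypeKernel k) {ι : Type*} [Fintype ι] (x : ι → X)
    (c : ι → ℂ) : 0 ≤ ∑ i, ∑ j, c i * (starRingEnd ℂ) (c j) * k (x j) (x i) := by
  let e := (Fintype.equivFin ι).symm
  exact (hk _ (x ∘ e) (c ∘ e)).trans_eq
    (Fintype.sum_equiv e _ _ fun i => Fintype.sum_equiv e _ _ fun j => rfl)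

theorem sum_sum_comp (hk : IsPositiveTypeKernel k) {ι : Type*} [Fintype ι] (φ : ι → Y → X)
    (c : ι → ℂ) :
    IsPositiveTypeKernel fun v w => ∑ i, ∑ j, c i * (starRingEnd ℂ) (c j) * k (φ j v) (φ i w) := by
  intro n y d
  convert hk.sum_sum_nonneg (fun p : Fin n × ι => φ p.2 (y p.1)) (fun p => d p.1 * c p.2) using 1
  simp only [Fintype.sum_prod_type, Finset.mul_sum, map_mul]
  refine Finset.sum_congr rfl fun a _ => ?_
  rw [Finset.sum_comm]
  refine Finset.sum_congr rfl fun b _ => Finset.sum_congr rfl fun i _ =>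
    Finset.sum_congr rfl fun j _ => ?_
  ring

end IsPositiveTypeKernel

theorem MeasureTheory.MeasurePreserving.integral_comp_of_stronglyMeasurable
    {X Y E : Type*} [MeasurableSpace X] [MeasurableSpace Y] [NormedAddCommGroup E]
    [NormedSpace ℝ E] {μ : Measure X} {ν : Measure Y} {φ : X → Y}
    (hφ : MeasurePreserving φ μ ν) {g : Y → E} (hg : StronglyMeasurable g) :
    ∫ x, g (φ x) ∂μ = ∫ y, g y ∂ν := by
  rw [← hφ.map_eq, integral_map_of_stronglyMeasurable hφ.measurable hg]

section Sampling

variable {ι α : Type*} [Fintype ι] [MeasurableSpace α] (ν : Measure α) [IsProbabilityMeasure ν]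

lemma measurePreserving_eval_prodMk_eval {a b : ι} (hab : a ≠ b) :
    MeasurePreserving (fun x : ι → α => (x a, x b)) (Measure.pi fun _ => ν) (ν.prod ν) := by
  have hindep : IndepFun (fun x : ι → α => x a) (fun x => x b) (Measure.pi fun _ => ν) :=
    (iIndepFun_pi (X := fun _ => id) fun _ => aemeasurable_id).indepFun hab
  refine ⟨by fun_prop, ?_⟩
  rw [(indepFun_iff_map_prod_eq_prod_map_map
    (measurable_pi_apply a).aemeasurable (measurable_pi_apply b).aemeasurable).1 hindep,
    (measurePreserving_eval _ a).map_eq, (measurePreserving_eval _ b).map_eq]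

lemma integral_comp_eval_prodMk_eval [DecidableEq ι] {Q : α → α → ℂ}
    (hQ : Measurable fun p : α × α => Q p.1 p.2) (a b : ι) :
    ∫ x, Q (x a) (x b) ∂(Measure.pi fun _ => ν) =
      if a = b then ∫ u, Q u u ∂ν else ∫ p, Q p.1 p.2 ∂(ν.prod ν) := by
  split_ifs with hab
  · subst hab
    have hdiag : StronglyMeasurable fun u => Q u u :=
      (hQ.comp (measurable_id.prodMk measurable_id)).stronglyMeasurable
    exact (measurePreserving_eval (fun _ : ι => ν) a).integral_comp_of_stronglyMeasurable hdiag
  · exact (measurePreserving_eval_prodMk_eval ν hab).integral_comp_of_stronglyMeasurable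
      hQ.stronglyMeasurable

lemma integral_sum_sum_comp_eval [DecidableEq ι] {Q : α → α → ℂ}
    (hQ : Measurable fun p : α × α => Q p.1 p.2) {C : ℝ} (hC : ∀ v w, ‖Q v w‖ ≤ C) :
    ∫ x, ∑ i, ∑ j, Q (x j) (x i) ∂(Measure.pi fun _ : ι => ν) =
      Fintype.card ι * ((Fintype.card ι - 1) * ∫ p, Q p.1 p.2 ∂(ν.prod ν) + ∫ u, Q u u ∂ν) := by
  have hint : ∀ i j : ι, Integrable (fun x : ι → α => Q (x j) (x i)) (Measure.pi fun _ => ν) :=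
    fun i j => .of_bound (hQ.comp (f := fun x : ι → α => (x j, x i))
      ((measurable_pi_apply j).prodMk (measurable_pi_apply i))).aestronglyMeasurable
      C (.of_forall fun _ => hC _ _)
  simp only [integral_finsetSum _ fun i _ => integrable_finsetSum _ fun j _ => hint i j,
    integral_finsetSum _ fun j _ => hint _ j, integral_comp_eval_prodMk_eval ν hQ]
  rcases isEmpty_or_nonempty ι with hι | hι
  · simp
  · simp [Finset.sum_ite, Finset.filter_eq', Finset.filter_ne', Nat.cast_sub Fintype.card_pos]
    ring

theorem IsPositiveTypeKernel.integral_prod_nonneg_of_isProbabilityMeasure {Q : α → α → ℂ}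
    (hpos : IsPositiveTypeKernel Q) (hQ : Measurable fun p : α × α => Q p.1 p.2) {C : ℝ}
    (hC : ∀ v w, ‖Q v w‖ ≤ C) :
    0 ≤ ∫ p, Q p.1 p.2 ∂(ν.prod ν) := by
  set T := ∫ p, Q p.1 p.2 ∂(ν.prod ν)
  set D := ∫ u, Q u u ∂ν
  have hsample : ∀ n : ℕ, 0 < n → 0 ≤ T + D / n := by
    intro n hn
    have hsum := integral_nonneg (μ := Measure.pi fun _ : Fin (n + 1) => ν)
      fun x => by simpa using hpos (n + 1) x 1
    rw [integral_sum_sum_comp_eval ν hQ hC] at hsum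
    have hscale : (0 : ℂ) ≤ ((((n + 1) * n : ℝ))⁻¹ : ℝ) := Complex.zero_le_real.2 (by positivity)
    convert mul_nonneg hscale hsum using 1
    push_cast [Fintype.card_fin]
    field_simp
    ring
  have hlim : Filter.Tendsto (fun n : ℕ => T + D / n) Filter.atTop (nhds T) := by
    simpa using tendsto_const_nhds.add (tendsto_const_div_atTop_nhds_zero_nat D)
  exact ge_of_tendsto hlim (Filter.eventually_atTop.2 ⟨1, hsample⟩)

end Sampling

theorem IsPositiveTypeKernel.integral_prod_nonneg {α : Type*} [MeasurableSpace α]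
    (ν : Measure α) [IsFiniteMeasure ν] {Q : α → α → ℂ}
    (hpos : IsPositiveTypeKernel Q) (hQ : Measurable fun p : α × α => Q p.1 p.2) {C : ℝ}
    (hC : ∀ v w, ‖Q v w‖ ≤ C) :
    0 ≤ ∫ p, Q p.1 p.2 ∂(ν.prod ν) := by
  rcases eq_zero_or_neZero ν with rfl | _
  · simp
  have hν : ν = ν Set.univ • ((ν Set.univ)⁻¹ • ν) := by
    rw [smul_smul, ENNReal.mul_inv_cancel (NeZero.ne _) (measure_ne_top _ _), one_smul]
  rw [hν, Measure.prod_smul_left, Measure.prod_smul_right, smul_smul, integral_smul_measure]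
  exact smul_nonneg ENNReal.toReal_nonneg
    (hpos.integral_prod_nonneg_of_isProbabilityMeasure _ hQ hC)

section WithDensity

variable {X : Type*} [MeasurableSpace X] {μ : Measure X} {f : X → ℝ}

theorem integral_withDensity_ofReal {E : Type*} [NormedAddCommGroup E] [NormedSpace ℝ E]
    (hf : Measurable f) (hf0 : ∀ x, 0 ≤ f x) (g : X → E) :
    ∫ x, g x ∂μ.withDensity (fun x => ENNReal.ofReal (f x)) = ∫ x, f x • g x ∂μ := by
  rw [integral_withDensity_eq_integral_toReal_smul hf.ennreal_ofReal
    (.of_forall fun _ => ENNReal.ofReal_lt_top)]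
  simp_rw [ENNReal.toReal_ofReal (hf0 _)]

theorem integral_integral_mul_eq_integral_prod_withDensity (hf : Measurable f)
    (hf0 : ∀ x, 0 ≤ f x) [SFinite (μ.withDensity fun x => ENNReal.ofReal (f x))]
    {K : X → X → ℂ} (hK : Integrable (fun p : X × X => K p.1 p.2)
      ((μ.withDensity fun x => ENNReal.ofReal (f x)).prod
        (μ.withDensity fun x => ENNReal.ofReal (f x)))) :
    ∫ v, ∫ w, ((f v : ℂ) * (f w : ℂ)) * K v w ∂μ ∂μ =
      ∫ p, K p.1 p.2 ∂((μ.withDensity fun x => ENNReal.ofReal (f x)).prod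
        (μ.withDensity fun x => ENNReal.ofReal (f x))) := by
  simp only [integral_prod _ hK, integral_withDensity_ofReal hf hf0, Complex.real_smul, mul_assoc,
    integral_const_mul]

end WithDensity

theorem IsPositiveTypeKernel.integral_prod_mul {G : Type*} [Mul G] [MeasurableSpace G]
    [MeasurableMul G] {k : G → G → ℂ} (hk : IsPositiveTypeKernel k)
    (hkm : Measurable fun p : G × G => k p.1 p.2) {C : ℝ} (hC : ∀ s t, ‖k s t‖ ≤ C)
    (ν : Measure G) [IsFiniteMeasure ν] :
    IsPositiveTypeKernel fun s t => ∫ p, k (s * p.1) (t * p.2) ∂(ν.prod ν) := by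
  intro n s lam
  have hKm : ∀ i j : Fin n, Measurable fun p : G × G => k (s j * p.1) (s i * p.2) :=
    fun i j => hkm.comp (f := fun p : G × G => (s j * p.1, s i * p.2)) (by fun_prop)
  have hK : ∀ i j : Fin n, Integrable (fun p : G × G => k (s j * p.1) (s i * p.2)) (ν.prod ν) :=
    fun i j => .of_bound (hKm i j).aestronglyMeasurable C (.of_forall fun _ => hC _ _)
  set Q : G → G → ℂ := fun v w => ∑ i, ∑ j, lam i * (starRingEnd ℂ) (lam j) * k (s j * v) (s i * w)
  have hQm : Measurable fun p : G × G => Q p.1 p.2 :=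
    Finset.measurable_sum _ fun i _ => Finset.measurable_sum _ fun j _ => (hKm i j).const_mul _
  have hQC : ∀ v w, ‖Q v w‖ ≤ ∑ i, ∑ j, ‖lam i‖ * ‖lam j‖ * C := fun v w =>
    (norm_sum_le _ _).trans <| Finset.sum_le_sum fun i _ =>
      (norm_sum_le _ _).trans <| Finset.sum_le_sum fun j _ => by
        rw [norm_mul, norm_mul, RCLike.norm_conj]
        exact mul_le_mul_of_nonneg_left (hC _ _) (by positivity)
  have hQ : ∫ p, Q p.1 p.2 ∂(ν.prod ν) =
      ∑ i, ∑ j, lam i * (starRingEnd ℂ) (lam j) * ∫ p, k (s j * p.1) (s i * p.2) ∂(ν.prod ν) := by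
    simp only [Q, integral_finsetSum _ fun i _ => integrable_finsetSum _ fun j _ =>
      (hK i j).const_mul _, integral_finsetSum _ fun j _ => (hK _ j).const_mul _,
      integral_const_mul]
  exact hQ ▸ (hk.sum_sum_comp (fun i v => s i * v) lam).integral_prod_nonneg ν hQm hQC

theorem convolution_preserves_positive_type_general
    {G : Type*} [TopologicalSpace G] [Group G] [IsTopologicalGroup G]
    [MeasurableSpace G] [BorelSpace G]
    (μ : Measure G) [μ.IsHaarMeasure]
    (k₀ : G → G → ℂ)
    (hmeas : Measurable (fun p : G × G => k₀ p.1 p.2))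
    (hbdd : ∃ C : ℝ, ∀ s t, ‖k₀ s t‖ ≤ C)
    (hpos : IsPositiveTypeKernel k₀)
    (f : G → ℝ) (hfc : Continuous f) (hfs : HasCompactSupport f)
    (hf0 : ∀ t, 0 ≤ f t) :
    IsPositiveTypeKernel
      (fun s t => ∫ v, ∫ w, ((f v : ℂ) * (f w : ℂ)) * k₀ (s * v) (t * w) ∂μ ∂μ) := by
  obtain ⟨C, hC⟩ := hbdd
  have : IsFiniteMeasure (μ.withDensity fun x => ENNReal.ofReal (f x)) :=
    isFiniteMeasure_withDensity_ofReal (hfc.integrable_of_hasCompactSupport hfs).2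
  convert hpos.integral_prod_mul hmeas hC (μ.withDensity fun x => ENNReal.ofReal (f x))
    using 3 with s t
  refine integral_integral_mul_eq_integral_prod_withDensity hfc.measurable hf0
    (.of_bound ?_ C (.of_forall fun _ => hC _ _))
  exact (hmeas.comp (f := fun p : G × G => (s * p.1, t * p.2)) (by fun_prop)).aestronglyMeasurable

theorem convolution_preserves_positive_type
    {G : Type*} [TopologicalSpace G] [Group G] [IsTopologicalGroup G]
    [LocallyCompactSpace G] [SecondCountableTopology G] [T2Space G]
    [MeasurableSpace G] [BorelSpace G]
    (μ : Measure G) [μ.IsHaarMeasure]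
    (k₀ : G → G → ℂ)
    (hmeas : Measurable (fun p : G × G => k₀ p.1 p.2))
    (hbdd : ∃ C : ℝ, ∀ s t, ‖k₀ s t‖ ≤ C)
    (hpos : IsPositiveTypeKernel k₀)
    (f : G → ℝ) (hfc : Continuous f) (hfs : HasCompactSupport f)
    (hf0 : ∀ t, 0 ≤ f t) (hf1 : ∫ t, f t ∂μ = 1) :
    IsPositiveTypeKernel
      (fun s t => ∫ v, ∫ w, ((f v : ℂ) * (f w : ℂ)) * k₀ (s * v) (t * w) ∂μ ∂μ) :=
  convolution_preserves_positive_type_general μ k₀ hmeas hbdd hpos f hfc hfs hf0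
end

section
/- Let u : G → H be a uniform embedding of a l.c.s.c. group into a Hilbert space, and k₀(s,t) = ‖u(s) - u(t)‖². Let f be a cut-off function and define k(s,t) = ∫∫ f(v) f(w) k₀(sv, tw) dμ(v) dμ(w) and φ(s,t) = ‖(u*f)(s) - (u*f)(t)‖², where (u*f)(t) is the weak integral ∫ f(s⁻¹t) u(s) dμ(s). Then φ(s,t) = k(s,t) - (k(s,s) + k(t,t))/2 for all s, t ∈ G. -/
/-!
Write `F p = ∫ f(v) u(pv) dμ(v)`; by left invariance of `μ` and symmetry of `f` this is `(u * f)(p)`.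
Expanding the square and using `∫ f dμ = 1`, the double integral of `‖a_v - b_w‖²` against
`f(v) f(w)` is the squared distance of the `f`-means of `a` and `b` plus their two `f`-variances:
`k(s, t) = ‖F s - F t‖² + V s + V t` with `V p = ∫ f(v) ‖u(pv)‖² dμ(v) - ‖F p‖²`.
Taking `s = t` gives `k(s, s) = 2 V s`, and the identity follows.
-/

open MeasureTheory
open scoped RealInnerProductSpace

lemma mul_norm_sub_sq_eq {H : Type*} [NormedAddCommGroup H] [InnerProductSpace ℝ H]
    (r : ℝ) (x y : H) : r * ‖x - y‖ ^ 2 = r * ‖x‖ ^ 2 - 2 * ⟪x, r • y⟫ + r * ‖y‖ ^ 2 := by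
  rw [norm_sub_sq_real, real_inner_smul_right]
  ring

section WeightedMean

variable {X : Type*} [MeasurableSpace X] {ν : Measure X}
  {H : Type*} [NormedAddCommGroup H] [InnerProductSpace ℝ H]
  {f : X → ℝ} {b : X → H}

lemma integrable_mul_norm_sub_sq (hf : Integrable f ν) (hb : Integrable (fun w => f w • b w) ν)
    (hb2 : Integrable (fun w => f w * ‖b w‖ ^ 2) ν) (x : H) :
    Integrable (fun w => f w * ‖x - b w‖ ^ 2) ν := by
  simp_rw [mul_norm_sub_sq_eq]
  exact ((hf.mul_const _).sub ((hb.const_inner x).const_mul 2)).add hb2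

lemma integral_mul_norm_sub_sq [CompleteSpace H] (hf : Integrable f ν) (hf1 : ∫ w, f w ∂ν = 1)
    (hb : Integrable (fun w => f w • b w) ν) (hb2 : Integrable (fun w => f w * ‖b w‖ ^ 2) ν)
    (x : H) :
    ∫ w, f w * ‖x - b w‖ ^ 2 ∂ν = ‖x - ∫ w, f w • b w ∂ν‖ ^ 2 +
      ((∫ w, f w * ‖b w‖ ^ 2 ∂ν) - ‖∫ w, f w • b w ∂ν‖ ^ 2) := by
  have hinner := (hb.const_inner (𝕜 := ℝ) x).const_mul 2
  have hlin : Integrable (fun w => f w * ‖x‖ ^ 2 - 2 * ⟪x, f w • b w⟫) ν :=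
    (hf.mul_const _).sub hinner
  simp_rw [mul_norm_sub_sq_eq]
  rw [integral_add hlin hb2, integral_sub (hf.mul_const _) hinner,
    integral_mul_const, integral_const_mul, integral_inner hb, hf1, norm_sub_sq_real]
  ring

lemma integral_integral_mul_mul_norm_sub_sq [CompleteSpace H] {a : X → H} (hf : Integrable f ν)
    (hf1 : ∫ w, f w ∂ν = 1)
    (ha : Integrable (fun v => f v • a v) ν) (ha2 : Integrable (fun v => f v * ‖a v‖ ^ 2) ν)
    (hb : Integrable (fun w => f w • b w) ν) (hb2 : Integrable (fun w => f w * ‖b w‖ ^ 2) ν) :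
    ∫ v, ∫ w, f v * f w * ‖a v - b w‖ ^ 2 ∂ν ∂ν =
      ‖(∫ v, f v • a v ∂ν) - ∫ w, f w • b w ∂ν‖ ^ 2 +
        ((∫ v, f v * ‖a v‖ ^ 2 ∂ν) - ‖∫ v, f v • a v ∂ν‖ ^ 2) +
        ((∫ w, f w * ‖b w‖ ^ 2 ∂ν) - ‖∫ w, f w • b w ∂ν‖ ^ 2) := by
  set mb := ∫ w, f w • b w ∂ν
  set Vb := (∫ w, f w * ‖b w‖ ^ 2 ∂ν) - ‖mb‖ ^ 2
  have hinner : ∀ v, ∫ w, f v * f w * ‖a v - b w‖ ^ 2 ∂ν = f v * ‖mb - a v‖ ^ 2 + f v * Vb := by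
    intro v
    simp_rw [mul_assoc]
    rw [integral_const_mul, integral_mul_norm_sub_sq hf hf1 hb hb2, norm_sub_rev]
    ring
  simp_rw [hinner]
  rw [integral_add (integrable_mul_norm_sub_sq hf ha ha2 mb) (hf.mul_const _), integral_mul_const,
    hf1, integral_mul_norm_sub_sq hf hf1 ha ha2, norm_sub_rev]
  ring

end WeightedMean

lemma integrable_smul_of_norm_le_on_tsupport {X : Type*} [MeasurableSpace X] [TopologicalSpace X]
    [OpensMeasurableSpace X] {ν : Measure X} [IsFiniteMeasureOnCompacts ν]
    {E : Type*} [NormedAddCommGroup E] [NormedSpace ℝ E]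
    {f : X → ℝ} (hfc : Continuous f) (hfs : HasCompactSupport f)
    {g : X → E} (hg : AEStronglyMeasurable g ν) {C : ℝ} (hC : ∀ v ∈ tsupport f, ‖g v‖ ≤ C) :
    Integrable (fun v => f v • g v) ν := by
  refine ((hfc.integrable_of_hasCompactSupport hfs).norm.mul_const (max C 0)).mono'
    (hfc.aestronglyMeasurable.smul hg) (Filter.Eventually.of_forall fun v => ?_)
  rw [norm_smul]
  by_cases hv : v ∈ tsupport f
  · exact mul_le_mul_of_nonneg_left ((hC v hv).trans (le_max_left _ _)) (norm_nonneg _)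
  · simp [image_eq_zero_of_notMem_tsupport hv]

lemma integral_smul_inv_mul_eq {G : Type*} [Group G] [MeasurableSpace G] [MeasurableMul G]
    {μ : Measure G} [μ.IsMulLeftInvariant] {E : Type*} [NormedAddCommGroup E] [NormedSpace ℝ E]
    {f : G → ℝ} (hfsymm : ∀ t, f t⁻¹ = f t) (u : G → E) (p : G) :
    ∫ x, f (x⁻¹ * p) • u x ∂μ = ∫ v, f v • u (p * v) ∂μ := by
  rw [← integral_mul_left_eq_self _ p]
  simp_rw [mul_inv_rev, inv_mul_cancel_right, hfsymm]

theorem smoothing_identity_for_neg_type_kernel_general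
    {G : Type*} [TopologicalSpace G] [Group G] [IsTopologicalGroup G]
    [MeasurableSpace G] [BorelSpace G]
    (μ : Measure G) [μ.IsHaarMeasure]
    {H : Type*} [NormedAddCommGroup H] [InnerProductSpace ℝ H] [CompleteSpace H]
    [SecondCountableTopology H] [MeasurableSpace H] [BorelSpace H]
    (u : G → H) (humeas : Measurable u)
    (hbdd : ∀ K : Set G, IsCompact K → ∃ R : ℝ, ∀ s t : G, s⁻¹ * t ∈ K → ‖u s - u t‖ ≤ R)
    (f : G → ℝ) (hfc : Continuous f) (hfs : HasCompactSupport f)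
    (hfsymm : ∀ t, f t⁻¹ = f t) (hf1 : ∫ t, f t ∂μ = 1) :
    ∀ s t : G,
      ‖(∫ x, f (x⁻¹ * s) • u x ∂μ) - (∫ x, f (x⁻¹ * t) • u x ∂μ)‖ ^ 2 =
        (∫ v, ∫ w, f v * f w * ‖u (s * v) - u (t * w)‖ ^ 2 ∂μ ∂μ) -
          ((∫ v, ∫ w, f v * f w * ‖u (s * v) - u (s * w)‖ ^ 2 ∂μ ∂μ) +
           (∫ v, ∫ w, f v * f w * ‖u (t * v) - u (t * w)‖ ^ 2 ∂μ ∂μ)) / 2 := by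
  obtain ⟨R, hR⟩ := hbdd (tsupport f) hfs
  have hbound : ∀ p, ∀ v ∈ tsupport f, ‖u (p * v)‖ ≤ ‖u p‖ + R := fun p v hv =>
    (norm_le_norm_add_norm_sub (u p) _).trans (by gcongr; exact hR p (p * v) (by simpa using hv))
  have hmeas : ∀ p, AEStronglyMeasurable (fun v => u (p * v)) μ :=
    fun p => (humeas.comp (measurable_const_mul p)).aestronglyMeasurable
  have hint : ∀ p, Integrable (fun v => f v • u (p * v)) μ := fun p =>
    integrable_smul_of_norm_le_on_tsupport hfc hfs (hmeas p) (hbound p)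
  have hint2 : ∀ p, Integrable (fun v => f v * ‖u (p * v)‖ ^ 2) μ := fun p =>
    integrable_smul_of_norm_le_on_tsupport hfc hfs ((hmeas p).norm.pow 2) (C := (‖u p‖ + R) ^ 2)
      fun v hv => by
        rw [norm_pow, norm_norm]
        exact pow_le_pow_left₀ (norm_nonneg _) (hbound p v hv) 2
  have hfint := hfc.integrable_of_hasCompactSupport hfs (μ := μ)
  intro s t
  rw [integral_smul_inv_mul_eq hfsymm, integral_smul_inv_mul_eq hfsymm]
  simp only [integral_integral_mul_mul_norm_sub_sq hfint hf1 (hint _) (hint2 _) (hint _) (hint2 _),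
    sub_self, norm_zero]
  ring

theorem smoothing_identity_for_neg_type_kernel
    {G : Type*} [TopologicalSpace G] [Group G] [IsTopologicalGroup G]
    [LocallyCompactSpace G] [SecondCountableTopology G] [T2Space G]
    [MeasurableSpace G] [BorelSpace G]
    (μ : Measure G) [μ.IsHaarMeasure]
    {H : Type*} [NormedAddCommGroup H] [InnerProductSpace ℝ H] [CompleteSpace H]
    [SecondCountableTopology H] [MeasurableSpace H] [BorelSpace H]
    (u : G → H) (humeas : Measurable u)
    (hbdd : ∀ K : Set G, IsCompact K → ∃ R : ℝ, ∀ s t : G, s⁻¹ * t ∈ K → ‖u s - u t‖ ≤ R)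
    (f : G → ℝ) (hfc : Continuous f) (hfs : HasCompactSupport f)
    (hf0 : ∀ t, 0 ≤ f t) (hfsymm : ∀ t, f t⁻¹ = f t) (hf1 : ∫ t, f t ∂μ = 1) :
    ∀ s t : G,
      ‖(∫ x, f (x⁻¹ * s) • u x ∂μ) - (∫ x, f (x⁻¹ * t) • u x ∂μ)‖ ^ 2 =
        (∫ v, ∫ w, f v * f w * ‖u (s * v) - u (t * w)‖ ^ 2 ∂μ ∂μ) -
          ((∫ v, ∫ w, f v * f w * ‖u (s * v) - u (s * w)‖ ^ 2 ∂μ ∂μ) +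
           (∫ v, ∫ w, f v * f w * ‖u (t * v) - u (t * w)‖ ^ 2 ∂μ ∂μ)) / 2 :=
  smoothing_identity_for_neg_type_kernel_general μ u humeas hbdd f hfc hfs hfsymm hf1
end

section
/- Let G be a l.c.s.c. group. If for every compact K ⊆ G and ε > 0 there exist a compact L ⊆ G and a (not necessarily continuous) map η : G → L¹(G) with ‖η_t‖₁ = 1, supp η_t ⊆ tL for all t, and sup_{(s,t): s⁻¹t ∈ K} ‖η_s - η_t‖₁ < ε, then the same holds with η additionally Borel measurable (as a map into L¹(G)) and piecewise constant on a countable Borel partition of G. -/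
/-!
Cover `G` by countably many left translates `eₙ V` of a compact neighbourhood `V` of `1`, and
let `q t` be the first `n` with `t ∈ eₙ V`. Given `η₀` for the enlarged compact set `V⁻¹ K V`,
the map `t ↦ η₀ (e (q t))` is constant on the Borel fibres of `q`; since `t⁻¹ e (q t) ∈ V`, it
is supported in `t (V L)`, and `s⁻¹ t ∈ K` forces `(e (q s))⁻¹ e (q t) ∈ V⁻¹ K V`.
-/

open MeasureTheory Pointwise

theorem Set.iUnion_preimage_singleton_eq_univ {X ι : Type*} (f : X → ι) :
    ⋃ i, f ⁻¹' {i} = Set.univ :=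
  Set.iUnion_eq_univ_iff.2 fun x => ⟨f x, rfl⟩

section Translates

variable {G : Type*} [TopologicalSpace G] [Group G] [ContinuousMul G]

theorem exists_seq_forall_exists_inv_mul_mem [TopologicalSpace.SeparableSpace G] {U : Set G}
    (hU : IsOpen U) (h1U : (1 : G) ∈ U) : ∃ e : ℕ → G, ∀ t, ∃ n, t⁻¹ * e n ∈ U :=
  ⟨TopologicalSpace.denseSeq G, fun t =>
    (TopologicalSpace.denseRange_denseSeq G).exists_mem_open
      (hU.preimage (continuous_const_mul t⁻¹)) ⟨t, by simpa using h1U⟩⟩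

theorem exists_measurable_index_inv_mul_mem [ContinuousInv G] [TopologicalSpace.SeparableSpace G]
    [MeasurableSpace G] [OpensMeasurableSpace G] {U : Set G} (hU : IsOpen U) (h1U : (1 : G) ∈ U) :
    ∃ e : ℕ → G, ∃ q : G → ℕ, Measurable q ∧ ∀ t, t⁻¹ * e (q t) ∈ U := by
  classical
  obtain ⟨e, he⟩ := exists_seq_forall_exists_inv_mul_mem hU h1U
  refine ⟨e, fun t => Nat.find (he t), measurable_find he fun n => ?_,
    fun t => Nat.find_spec (he t)⟩
  exact (hU.preimage ((continuous_mul_const (e n)).comp continuous_inv)).measurableSet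

end Translates

section Group

variable {G : Type*} [Group G]

theorem image_mul_left_subset_of_inv_mul_mem {s t : G} {V : Set G} (h : t⁻¹ * s ∈ V) (L : Set G) :
    (s * ·) '' L ⊆ (t * ·) '' (V * L) := by
  rintro _ ⟨l, hl, rfl⟩
  exact ⟨t⁻¹ * s * l, Set.mul_mem_mul h hl, by simp [mul_assoc]⟩

theorem inv_mul_mem_inv_mul_mul {s t a b : G} {K V : Set G} (hst : s⁻¹ * t ∈ K)
    (ha : s⁻¹ * a ∈ V) (hb : t⁻¹ * b ∈ V) : a⁻¹ * b ∈ V⁻¹ * K * V := by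
  have : a⁻¹ * b = (s⁻¹ * a)⁻¹ * (s⁻¹ * t) * (t⁻¹ * b) := by group
  rw [this]
  exact Set.mul_mem_mul (Set.mul_mem_mul (Set.inv_mem_inv.2 ha) hst) hb

variable [MeasurableSpace G] {μ : Measure G} {M : Type*} [Zero M]

theorem ae_eq_zero_off_translate_comp {F : G → G → M} {L V : Set G}
    (hF : ∀ t, ∀ᵐ s ∂μ, s ∉ (t * ·) '' L → F t s = 0) {r : G → G} (hr : ∀ t, t⁻¹ * r t ∈ V)
    (t : G) : ∀ᵐ s ∂μ, s ∉ (t * ·) '' (V * L) → F (r t) s = 0 := by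
  filter_upwards [hF (r t)] with s hs hsL
  exact hs fun h => hsL (image_mul_left_subset_of_inv_mul_mem (hr t) L h)

end Group

theorem exists_borel_piecewise_constant_property_A_maps_general
    {G : Type*} [TopologicalSpace G] [Group G] [IsTopologicalGroup G]
    [LocallyCompactSpace G] [SecondCountableTopology G]
    [MeasurableSpace G] [BorelSpace G]
    (μ : Measure G)
    (hyp : ∀ K : Set G, IsCompact K → ∀ ε > (0 : ℝ),
      ∃ L : Set G, IsCompact L ∧
        ∃ η : G → Lp ℝ 1 μ,
          (∀ t : G, ‖η t‖ = 1) ∧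
          (∀ t : G, ∀ᵐ s ∂μ, s ∉ (fun x => t * x) '' L → (η t : G → ℝ) s = 0) ∧
          (∀ s t : G, s⁻¹ * t ∈ K → ‖η s - η t‖ < ε)) :
    ∀ K : Set G, IsCompact K → ∀ ε > (0 : ℝ),
      ∃ L : Set G, IsCompact L ∧
        ∃ η : G → Lp ℝ 1 μ,
          StronglyMeasurable η ∧
          (∃ Cn : ℕ → Set G,
            (∀ n, MeasurableSet (Cn n)) ∧
            Pairwise (Function.onFun Disjoint Cn) ∧
            (⋃ n, Cn n) = Set.univ ∧
            ∀ n, ∀ s ∈ Cn n, ∀ t ∈ Cn n, η s = η t) ∧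
          (∀ t : G, ‖η t‖ = 1) ∧
          (∀ t : G, ∀ᵐ s ∂μ, s ∉ (fun x => t * x) '' L → (η t : G → ℝ) s = 0) ∧
          (∀ s t : G, s⁻¹ * t ∈ K → ‖η s - η t‖ < ε) := by
  intro K hK ε hε
  obtain ⟨V, hVc, hV1⟩ := exists_compact_mem_nhds (1 : G)
  obtain ⟨e, q, hq, hqV⟩ :=
    exists_measurable_index_inv_mul_mem isOpen_interior (mem_interior_iff_mem_nhds.2 hV1)
  replace hqV : ∀ t, t⁻¹ * e (q t) ∈ V := fun t => interior_subset (hqV t)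
  obtain ⟨L, hLc, η₀, hnorm, hsupp, hclose⟩ := hyp _ ((hVc.inv.mul hK).mul hVc) ε hε
  refine ⟨V * L, hVc.mul hLc, fun t => η₀ (e (q t)), ?_, ?_, fun t => hnorm _,
    ae_eq_zero_off_translate_comp hsupp hqV,
    fun s t hst => hclose _ _ (inv_mul_mem_inv_mul_mul hst (hqV s) (hqV t))⟩
  · exact (StronglyMeasurable.of_discrete (f := fun n => η₀ (e n))).comp_measurable hq
  · refine ⟨fun n => q ⁻¹' {n}, fun n => hq (measurableSet_singleton n),
      pairwise_disjoint_fiber q, Set.iUnion_preimage_singleton_eq_univ q, ?_⟩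
    rintro n s (hs : q s = n) t (ht : q t = n)
    exact congrArg (fun n => η₀ (e n)) (hs.trans ht.symm)

theorem exists_borel_piecewise_constant_property_A_maps
    {G : Type*} [TopologicalSpace G] [Group G] [IsTopologicalGroup G]
    [LocallyCompactSpace G] [SecondCountableTopology G] [T2Space G]
    [MeasurableSpace G] [BorelSpace G]
    (μ : Measure G) [μ.IsHaarMeasure]
    (hyp : ∀ K : Set G, IsCompact K → ∀ ε > (0 : ℝ),
      ∃ L : Set G, IsCompact L ∧
        ∃ η : G → Lp ℝ 1 μ,
          (∀ t : G, ‖η t‖ = 1) ∧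
          (∀ t : G, ∀ᵐ s ∂μ, s ∉ (fun x => t * x) '' L → (η t : G → ℝ) s = 0) ∧
          (∀ s t : G, s⁻¹ * t ∈ K → ‖η s - η t‖ < ε)) :
    ∀ K : Set G, IsCompact K → ∀ ε > (0 : ℝ),
      ∃ L : Set G, IsCompact L ∧
        ∃ η : G → Lp ℝ 1 μ,
          StronglyMeasurable η ∧
          (∃ Cn : ℕ → Set G,
            (∀ n, MeasurableSet (Cn n)) ∧
            Pairwise (Function.onFun Disjoint Cn) ∧
            (⋃ n, Cn n) = Set.univ ∧
            ∀ n, ∀ s ∈ Cn n, ∀ t ∈ Cn n, η s = η t) ∧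
          (∀ t : G, ‖η t‖ = 1) ∧
          (∀ t : G, ∀ᵐ s ∂μ, s ∉ (fun x => t * x) '' L → (η t : G → ℝ) s = 0) ∧
          (∀ s t : G, s⁻¹ * t ∈ K → ‖η s - η t‖ < ε) :=
  exists_borel_piecewise_constant_property_A_maps_general μ hyp
end
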